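/- arXiv:2205.13329 — 3 statements merged into one kernel-verified Lean document; each statement's English description precedes it below -/
import Mathlib

section
/- Let (M, η, Ω, Θ) satisfy dη = Θ∧η and dΩ = 2Θ∧Ω for a closed 1-form Θ (an LCC manifold), and let M̄ be a one-dimensional fibration π : M̄ → M with a 1-form u satisfying du = π*Θ ∧ u. Then the two-form Ω̄ = π*Ω + π*η ∧ u satisfies dΩ̄ = 2π*Θ ∧ Ω̄; i.e. (M̄, Ω̄) is LCS with Lee form 2π*Θ. -/
/-- Let (M, η, Ω, Θ) satisfy dη = Θ∧η and dΩ = 2Θ∧Ω for a closed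
1-form Θ (an LCC manifold), and let M̄ be a one-dimensional fibration
π : M̄ → M with a 1-form u satisfying du = π*Θ ∧ u.  Then the two-form
Ω̄ = π*Ω + π*η ∧ u satisfies dΩ̄ = 2π*Θ ∧ Ω̄; i.e. (M̄, Ω̄) is LCS with Lee
form 2π*Θ.  Forms on M (ΛMk) and on M̄ (ΛNk) are abstracted, with the exterior
derivatives, wedge products and the pullback π* obeying the usual rules. -/
theorem lcc_symplectization_is_lcs
    {ΛM1 ΛM2 ΛM3 ΛN1 ΛN2 ΛN3 : Type*}
    [AddCommGroup ΛM1] [AddCommGroup ΛM2] [AddCommGroup ΛM3]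
    [AddCommGroup ΛN1] [AddCommGroup ΛN2] [AddCommGroup ΛN3]
    (dM1 : ΛM1 →+ ΛM2) (dM2 : ΛM2 →+ ΛM3)
    (dN1 : ΛN1 →+ ΛN2) (dN2 : ΛN2 →+ ΛN3)
    (pull1 : ΛM1 →+ ΛN1) (pull2 : ΛM2 →+ ΛN2) (pull3 : ΛM3 →+ ΛN3)
    (wM11 : ΛM1 → ΛM1 → ΛM2) (wM12 : ΛM1 → ΛM2 → ΛM3)
    (wN11 : ΛN1 → ΛN1 → ΛN2) (wN12 : ΛN1 → ΛN2 →+ ΛN3) (wN21 : ΛN2 → ΛN1 → ΛN3)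
    -- the pullback commutes with d and with wedge products
    (hpd1 : ∀ α, dN1 (pull1 α) = pull2 (dM1 α))
    (hpd2 : ∀ α, dN2 (pull2 α) = pull3 (dM2 α))
    (hpw11 : ∀ α β : ΛM1, pull2 (wM11 α β) = wN11 (pull1 α) (pull1 β))
    (hpw12 : ∀ (α : ΛM1) (β : ΛM2), pull3 (wM12 α β) = wN12 (pull1 α) (pull2 β))
    -- Leibniz rule for the wedge of two 1-forms on M̄
    (hLeib : ∀ α β : ΛN1, dN2 (wN11 α β) = wN21 (dN1 α) β - wN12 α (dN1 β))
    -- associativity and graded commutativity of wedges of 1-forms on M̄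
    (hassoc : ∀ a b c : ΛN1, wN21 (wN11 a b) c = wN12 a (wN11 b c))
    (hanti : ∀ a b c : ΛN1, wN12 a (wN11 b c) = -wN12 b (wN11 a c))
    -- the LCC structure and the 1-form u
    (η Θ : ΛM1) (Ω : ΛM2) (u : ΛN1)
    (hΘ : dM1 Θ = 0)
    (hη : dM1 η = wM11 Θ η)
    (hΩ : dM2 Ω = 2 • wM12 Θ Ω)
    (hu : dN1 u = wN11 (pull1 Θ) u) :
    dN2 (pull2 Ω + wN11 (pull1 η) u) =
      2 • wN12 (pull1 Θ) (pull2 Ω + wN11 (pull1 η) u) := by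
  rw [map_add, hpd2, hΩ, map_nsmul, hpw12, hLeib, hpd1, hη, hpw11, hassoc, hu,
    hanti, hanti (pull1 η), map_add]
  abel
end

section
/- On T*Q × ℝ with coordinates (q^i, p_i, t), Lee form Θ = ψ_j dq^j + ζ dt with 1 − tζ ≠ 0, and LCC forms Ω = dq^i∧dp_i + 2p_iΘ∧dq^i, η = dt − tΘ, the Reeb field is R = (1/(1−tζ)) ∂/∂t + (2p_iζ/(1−tζ)) ∂/∂p_i, i.e. this vector field satisfies ι_Rη = 1 and ι_RΩ = 0. -/
/-- On T*Q × ℝ with coordinates (qⁱ, pᵢ, t), Lee form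
Θ = ψ_j dq^j + ζ dt with 1 − tζ ≠ 0, and LCC forms
Ω = dqⁱ∧dpᵢ + 2pᵢΘ∧dqⁱ, η = dt − tΘ, the Reeb field is
R = (1/(1−tζ)) ∂/∂t + (2pᵢζ/(1−tζ)) ∂/∂pᵢ, i.e. this vector field satisfies
ι_Rη = 1 and ι_RΩ = 0.  Stated fibrewise at a point: a tangent vector v is a
triple (v_q, v_p, v_t); Θ(v) = Σ ψ_j v_q^j + ζ v_t, η(v) = v_t − tΘ(v), and
Ω(v,w) = Σ (v_qⁱ w_pᵢ − w_qⁱ v_pᵢ) + 2Σ pᵢ(Θ(v) w_qⁱ − Θ(w) v_qⁱ). -/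
theorem lcc_reeb_field_in_darboux_coordinates
    {n : ℕ} (q p ψ : Fin n → ℝ) (t ζ : ℝ) (h : 1 - t * ζ ≠ 0) :
    -- η(R) = 1 for R = (0, 2pᵢζ/(1−tζ), 1/(1−tζ))
    ((fun v : (Fin n → ℝ) × (Fin n → ℝ) × ℝ =>
        v.2.2 - t * ((∑ j, ψ j * v.1 j) + ζ * v.2.2))
      (0, fun i => 2 * p i * ζ / (1 - t * ζ), 1 / (1 - t * ζ)) = 1) ∧
    -- ι_RΩ = 0, i.e. Ω(R, w) = 0 for every tangent vector w
    ∀ w : (Fin n → ℝ) × (Fin n → ℝ) × ℝ,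
      (fun v w : (Fin n → ℝ) × (Fin n → ℝ) × ℝ =>
          (∑ i, (v.1 i * w.2.1 i - w.1 i * v.2.1 i)) +
            2 * ∑ i, p i *
              (((∑ j, ψ j * v.1 j) + ζ * v.2.2) * w.1 i -
                ((∑ j, ψ j * w.1 j) + ζ * w.2.2) * v.1 i))
        (0, fun i => 2 * p i * ζ / (1 - t * ζ), 1 / (1 - t * ζ)) w = 0 := by
  constructor
  · simp only [Prod.fst, Prod.snd, Pi.zero_apply, mul_zero, Finset.sum_const_zero, zero_add]
    field_simp
  · intro w
    simp only [Pi.zero_apply, mul_zero, Finset.sum_const_zero, zero_add, mul_zero, sub_zero,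
      zero_mul, mul_zero]
    simp only [Finset.mul_sum, ← Finset.sum_add_distrib]
    apply Finset.sum_eq_zero
    intro i _
    field_simp
    ring
end

section
/- For a smooth function F on ℝⁿ with coordinates x^a and a closed 1-form θ = θ_a dx^a with 1 − x^cθ_c ≠ 0, the LdR differential d_θF = dF − Fθ decomposes as d_θF = F_{:a} d_θx^a with coefficient functions F_{:a} = F_{,a} + (θ_a/(1 − x^cθ_c))(x^bF_{,b} − F); in particular if F is homogeneous of degree 1 then F_{:a} = F_{,a}. -/
/-- For a smooth function F on ℝⁿ with coordinates x^a and a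
closed 1-form θ = θ_a dx^a with 1 − x^cθ_c ≠ 0, the LdR differential
d_θF = dF − Fθ decomposes as d_θF = F_{:a} d_θx^a with coefficient functions
F_{:a} = F_{,a} + (θ_a/(1 − x^cθ_c))(x^bF_{,b} − F); in particular if F is
homogeneous of degree 1 then F_{:a} = F_{,a}.
Here F_{,a} = fderiv F (e_a), (d_θx^a)_b = δ_{ab} − x^aθ_b, and the
decomposition is stated componentwise: (d_θF)_b = Σ_a F_{:a}·(d_θx^a)_b. -/
theorem ldr_differential_of_function_coefficients
    {n : ℕ} (F : (Fin n → ℝ) → ℝ) (θ : (Fin n → ℝ) → Fin n → ℝ)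
    (hF : ContDiff ℝ (⊤ : ℕ∞) F)
    (hθ : ∀ a, ContDiff ℝ (⊤ : ℕ∞) fun y => θ y a)
    -- θ is closed: symmetry of the partial derivatives of its components
    (hclosed : ∀ (x : Fin n → ℝ) (a b : Fin n),
      fderiv ℝ (fun y => θ y a) x (Pi.single b 1) =
        fderiv ℝ (fun y => θ y b) x (Pi.single a 1)) :
    ∀ x : Fin n → ℝ, (1 - ∑ c, x c * θ x c) ≠ 0 →
      ((∀ b : Fin n,
        -- (d_θF)_b = F_{,b} − F θ_b
        fderiv ℝ F x (Pi.single b 1) - F x * θ x b =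
          -- Σ_a F_{:a} (d_θx^a)_b
          ∑ a, (fderiv ℝ F x (Pi.single a 1) +
                θ x a / (1 - ∑ c, x c * θ x c) *
                  ((∑ c, x c * fderiv ℝ F x (Pi.single c 1)) - F x)) *
              ((if a = b then (1:ℝ) else 0) - x a * θ x b)) ∧
      -- if F is homogeneous of degree 1, then F_{:a} = F_{,a}
      ((∀ (c : ℝ) (y : Fin n → ℝ), F (c • y) = c * F y) →
        ∀ a : Fin n,
          fderiv ℝ F x (Pi.single a 1) +
            θ x a / (1 - ∑ c, x c * θ x c) *
              ((∑ c, x c * fderiv ℝ F x (Pi.single c 1)) - F x) =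
          fderiv ℝ F x (Pi.single a 1))) := by

  intro x hx
  set D : Fin n → ℝ := fun a => fderiv ℝ F x (Pi.single a 1) with hD
  set T : ℝ := ∑ c, x c * θ x c with hT
  set S : ℝ := ∑ c, x c * D c with hS
  have key : ∀ b, D b - F x * θ x b =
      ∑ a, (D a + θ x a / (1 - T) * (S - F x)) *
        ((if a = b then (1:ℝ) else 0) - x a * θ x b) := by
    intro b
    have expand : ∀ a : Fin n, (D a + θ x a / (1 - T) * (S - F x)) *
        ((if a = b then (1:ℝ) else 0) - x a * θ x b) =
        ((if a = b then (D a + θ x a / (1 - T) * (S - F x)) else 0)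
          - (x a * D a) * θ x b - (x a * θ x a) * (θ x b / (1 - T) * (S - F x))) := by
      intro a
      by_cases h : a = b <;> simp [h] <;> ring
    rw [Finset.sum_congr rfl (fun a _ => expand a)]
    simp only [Finset.sum_sub_distrib, Finset.sum_ite_eq' Finset.univ b, Finset.mem_univ,
      if_true, ← Finset.sum_mul, ← hS, ← hT]
    field_simp
    ring
  refine ⟨key, ?_⟩
  intro hhom a
  -- Euler: S = F x
  have hdiff : DifferentiableAt ℝ F x := (hF.differentiable (by simp)) x
  have heuler : fderiv ℝ F x x = F x := by
    have h1 : HasDerivAt (fun c : ℝ => F (c • x)) (fderiv ℝ F ((1:ℝ) • x) x) 1 := by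
      have hs : HasDerivAt (fun c : ℝ => c • x) ((1:ℝ) • x) 1 := by
        simpa using (hasDerivAt_id (1:ℝ)).smul_const x
      have := (hF.differentiable (by simp) ((1:ℝ) • x)).hasFDerivAt.comp_hasDerivAt 1 hs
      simpa [Function.comp_def] using this
    have h2 : HasDerivAt (fun c : ℝ => F (c • x)) (F x) 1 := by
      have : (fun c : ℝ => F (c • x)) = fun c : ℝ => c * F x := by
        funext c; exact hhom c x
      rw [this]
      simpa using (hasDerivAt_id (1:ℝ)).mul_const (F x)
    have := h1.unique h2
    simpa using this
  have hxsum : fderiv ℝ F x x = S := by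
    have hxrep : x = ∑ c, x c • (Pi.single c (1:ℝ) : Fin n → ℝ) := by
      funext i
      simp [Finset.sum_apply, Pi.single_apply]
    have : fderiv ℝ F x x = fderiv ℝ F x (∑ c, x c • (Pi.single c (1:ℝ) : Fin n → ℝ)) := by
      rw [← hxrep]
    rw [this, map_sum]
    simp [hS, hD]
  have hSF : S - F x = 0 := by rw [← hxsum, heuler]; ring
  rw [hSF]
  ring
end
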